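/- arXiv:math-ph/9806002 — 3 statements merged into one kernel-verified Lean document; each statement's English description precedes it below -/
import Mathlib

section
/- Let B be an associative ring and g, L ∈ B such that ad_g^{m+1}(L) = 0 for some natural number m. Then g^{m+1} * L lies in the left ideal B*g generated by g; that is, there exists K ∈ B with g^{m+1} * L = K * g. -/
/-- Left multiplication by `g` agrees with `ad_g` modulo the left ideal `B * g`, and that ideal is
stable under left multiplication by `g`. -/
theorem pow_mul_sub_iterate_commutator_mem_span_singleton {B : Type*} [Ring B] (g L : B) (n : ℕ) :
    g ^ n * L - (fun x => g * x - x * g)^[n] L ∈ Ideal.span {g} := by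
  induction n with
  | zero => simp
  | succ n ih =>
    set a := (fun x => g * x - x * g)^[n] L
    have split : g ^ (n + 1) * L - (g * a - a * g) = g * (g ^ n * L - a) + a * g := by
      rw [pow_succ', mul_assoc]
      noncomm_ring
    rw [Function.iterate_succ_apply', split]
    exact add_mem (Ideal.mul_mem_left _ g ih) (Ideal.mem_span_singleton'.mpr ⟨a, rfl⟩)

/-- If `ad_g^{m+1}(L) = 0` then `g^{m+1} * L` lies in the left ideal generated by `g`. -/
theorem factor_left_ideal {B : Type*} [Ring B] (g L : B) (m : ℕ)
    (h : (fun x => g * x - x * g)^[m + 1] L = 0) :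
    ∃ K : B, g ^ (m + 1) * L = K * g := by
  have hmem := pow_mul_sub_iterate_commutator_mem_span_singleton g L (m + 1)
  rw [h, sub_zero] at hmem
  obtain ⟨K, hK⟩ := Ideal.mem_span_singleton'.mp hmem
  exact ⟨K, hK.symm⟩
end

section
/- Let B be an associative ring and g, L ∈ B with ad_g^{m+1}(L) = 0. Then L * g^{m+1} lies in the right ideal g*B; that is, there exists R ∈ B with L * g^{m+1} = g * R. -/
/-! Induction on `m`: `L * g^(m+1) = g * (L * g^m) - (ad_g L) * g^m`, and the last term lies in
`g * B` by the induction hypothesis applied to `ad_g L`, which `ad_g^m` kills. -/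

theorem mul_pow_succ_eq_sub_commutator_mul_pow {B : Type*} [Ring B] (g L : B) (n : ℕ) :
    L * g ^ (n + 1) = g * (L * g ^ n) - (g * L - L * g) * g ^ n := by
  rw [pow_succ', sub_mul, ← mul_assoc, ← mul_assoc, sub_sub_cancel]

/-- If `ad_g^{m+1}(L) = 0` then `L * g^{m+1}` lies in the right ideal generated by `g`. -/
theorem factor_right_ideal {B : Type*} [Ring B] (g L : B) (m : ℕ)
    (h : (fun x => g * x - x * g)^[m + 1] L = 0) :
    ∃ R : B, L * g ^ (m + 1) = g * R := by
  induction m generalizing L with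
  | zero => exact ⟨L, by simpa [sub_eq_zero, eq_comm] using h⟩
  | succ n ih =>
    obtain ⟨R, hR⟩ := ih (g * L - L * g) (by rwa [← Function.iterate_succ_apply])
    exact ⟨L * g ^ (n + 1) - R, by rw [mul_pow_succ_eq_sub_commutator_mul_pow, hR, mul_sub]⟩
end

section
/- Let B be an associative ring with elements g, L and suppose there exist K, Q ∈ B and invertible elements g^{-1}, (g^{m+1})^{-1} in a localization of B such that g^{m+1} L = K g and L^{n+1} g = Q L. Then L^{n+1} = Q (g^{m+1})^{-1} K in the localization; consequently, for any h of the form h = h' L^{n+1}, one has K h = (K h' Q (g^{m+1})^{-1}) K. -/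
/-! Since `g` is a unit, `g^{m+1} L = K g` solves to `L = (g^{m+1})⁻¹ K g`; substituting this into
`L^{n+1} g = Q L` and cancelling `g` on the right gives `L^{n+1} = Q (g^{m+1})⁻¹ K`, and the
intertwining relation is this identity multiplied by `K h'` on the left. -/

theorem Units.eq_mul_inv_mul_of_mul_eq {M : Type*} [Monoid M] (u v : Mˣ) {L K A Q : M}
    (hL : (v : M) * L = K * u) (hA : A * u = Q * L) : A = Q * ((v⁻¹ : Mˣ) : M) * K := by
  have hL' : L = ((v⁻¹ : Mˣ) : M) * K * u := by
    rw [mul_assoc, Units.eq_inv_mul_iff_mul_eq, hL]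
  apply (Units.mul_left_inj u).1
  rw [hA, hL']
  simp only [mul_assoc]

/-- In a localization where `g` is invertible, the relations `g^{m+1} L = K g` and
`L^{n+1} g = Q L` give `L^{n+1} = Q (g^{m+1})⁻¹ K`, and hence the intertwining
`K h = (K h' Q (g^{m+1})⁻¹) K` for `h = h' L^{n+1}`. -/
theorem intertwining_computation {R : Type*} [Ring R] (g L K Q : R) (m n : ℕ)
    (u : Rˣ) (hu : (u : R) = g)
    (h1 : g ^ (m + 1) * L = K * g)
    (h2 : L ^ (n + 1) * g = Q * L) :
    L ^ (n + 1) = Q * ((u⁻¹ : Rˣ) : R) ^ (m + 1) * K ∧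
      ∀ h' : R, K * (h' * L ^ (n + 1)) =
        (K * h' * Q * ((u⁻¹ : Rˣ) : R) ^ (m + 1)) * K := by
  subst hu
  have hpow : ((u⁻¹ : Rˣ) : R) ^ (m + 1) = (((u ^ (m + 1))⁻¹ : Rˣ) : R) := by
    rw [← inv_pow, Units.val_pow_eq_pow_val]
  have key : L ^ (n + 1) = Q * ((u⁻¹ : Rˣ) : R) ^ (m + 1) * K := by
    rw [hpow]
    exact Units.eq_mul_inv_mul_of_mul_eq u (u ^ (m + 1)) (by rwa [Units.val_pow_eq_pow_val]) h2
  exact ⟨key, fun h' => by rw [key]; simp only [mul_assoc]⟩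
end
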